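/- arXiv:1810.07390 — 8 statements merged into one kernel-verified Lean document; each statement's English description precedes it below -/
import Mathlib

section
/- Let A be an m × n matrix over a finite field F_q and let A' be an m' × n' matrix obtained from A by adding columns and rows, in block form A' = [[A, 0], [A'', A''']], with A'' of size (m'-m) × n and A''' of size (m'-m) × (n'-n). Then nullity(A') - nullity(A) = log_q of the sum over pairs (σ, τ), where τ ∈ F_q^I ranges over assignments to the set I of columns of A where A'' has a nonzero entry and σ ∈ F_q^{J} ranges over assignments to the new columns J = {n+1,...,n'}, of μ_{A,I}(τ) times the product over h ∈ [m'-m] of the indicator that Σ_{i∈I} A''_{h,i} τ_i + Σ_{j∈J} A'''_{h,j-n} σ_j = 0, where μ_{A,I} denotes the marginal on coordinates I of the uniform distribution on ker(A). -/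
/-!
Weighting by `μ τ`, whose numerator counts the `v ∈ ker A` restricting to `τ` on `I`, turns the
sum over `τ` into a sum over `v ∈ ker A`; since `A''` only reads the coordinates in `I`, the
product of indicators is then the indicator of `A'' v + A''' σ = 0`. Summing over `σ` counts the
pairs `(v, σ)` forming a kernel vector of the block matrix `A'`, so the whole sum equals
`q ^ nullity A' / q ^ nullity A`.
-/

open scoped BigOperators

/-- The nullity of a matrix over a field: dimension of its kernel. -/
noncomputable def nullity {F : Type*} [Field F] {α β : Type*} [Fintype α] [Fintype β]
    (A : Matrix α β F) : ℕ :=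
  Module.finrank F (LinearMap.ker A.mulVecLin)

open Matrix

theorem sum_card_fiber_mul {X Y R : Type*} [Fintype X] [Fintype Y] [DecidableEq Y]
    [CommSemiring R] (P : X → Prop) [DecidablePred P] (g : X → Y) (f : Y → R) :
    ∑ y, (Fintype.card {x // P x ∧ g x = y} : R) * f y = ∑ x with P x, f (g x) := by
  rw [← Finset.sum_fiberwise' _ g f]
  refine Fintype.sum_congr _ _ fun y => ?_
  rw [Finset.sum_const, nsmul_eq_mul, Fintype.card_subtype, Finset.filter_filter]

theorem prod_boole_eq_zero {ι M R : Type*} [Fintype ι] [Zero M] [DecidableEq M]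
    [CommMonoidWithZero R] (x : ι → M) :
    ∏ h, (if x h = 0 then (1 : R) else 0) = if x = 0 then 1 else 0 := by
  rw [Fintype.prod_boole]
  exact if_congr funext_iff.symm rfl rfl

theorem sum_coe_mul_eq_mulVec {γ β R : Type*} [Fintype β] [NonUnitalNonAssocSemiring R]
    (B : Matrix γ β R) (I : Finset β) (hB : ∀ i ∉ I, ∀ h, B h i = 0) (v : β → R) (h : γ) :
    ∑ i : I, B h i * v i = (B *ᵥ v) h := by
  rw [Finset.sum_coe_sort I (fun i => B h i * v i)]
  exact Finset.sum_subset (Finset.subset_univ I) fun i _ hi => by rw [hB i hi h, zero_mul]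

theorem fromBlocks_zero_mulVec_sumElim_eq_zero_iff {R α β γ δ : Type*} [Semiring R]
    [Fintype β] [Fintype δ] (A : Matrix α β R) (B : Matrix γ β R) (C : Matrix γ δ R)
    (v : β → R) (σ : δ → R) :
    fromBlocks A 0 B C *ᵥ Sum.elim v σ = 0 ↔ A *ᵥ v = 0 ∧ B *ᵥ v + C *ᵥ σ = 0 := by
  simp only [fromBlocks_mulVec, zero_mulVec, add_zero, funext_iff, Sum.forall, Sum.elim_inl,
    Sum.elim_inr, Function.comp_def, Pi.zero_apply]

section FiniteField

variable {F : Type*} [Field F] [Fintype F] [DecidableEq F]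

theorem card_mulVec_eq_zero {α β : Type*} [Fintype α] [Fintype β] [DecidableEq β]
    (A : Matrix α β F) :
    Fintype.card {v : β → F // A *ᵥ v = 0} = Fintype.card F ^ nullity A := by
  let e : {v : β → F // A *ᵥ v = 0} ≃ LinearMap.ker A.mulVecLin := Equiv.refl _
  have : Fintype (LinearMap.ker A.mulVecLin) := Fintype.ofEquiv _ e
  rw [Fintype.card_congr e, Module.card_eq_pow_finrank (K := F)]
  rfl

theorem card_ker_fromBlocks_zero {α β γ δ : Type*} [Fintype α] [Fintype β] [Fintype γ]
    [Fintype δ] [DecidableEq β] [DecidableEq δ]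
    (A : Matrix α β F) (B : Matrix γ β F) (C : Matrix γ δ F) :
    Fintype.card {w : β ⊕ δ → F // fromBlocks A 0 B C *ᵥ w = 0} =
      ∑ σ : δ → F, Fintype.card {v : β → F // A *ᵥ v = 0 ∧ B *ᵥ v + C *ᵥ σ = 0} := by
  rw [← Fintype.card_sigma]
  exact Fintype.card_congr <|
    (Equiv.subtypeProdEquivSigmaSubtype fun σ v => A *ᵥ v = 0 ∧ B *ᵥ v + C *ᵥ σ = 0).symm.trans
      (((Equiv.prodComm _ _).trans (Equiv.sumArrowEquivProdArrow β δ F).symm).subtypeEquiv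
        fun p => (fromBlocks_zero_mulVec_sumElim_eq_zero_iff A B C p.2 p.1).symm) |>.symm

theorem sum_card_restrict_mul_prod_boole {α β γ R : Type*} [Fintype α] [Fintype β] [Fintype γ]
    [DecidableEq β] [CommSemiring R] (A : Matrix α β F) (B : Matrix γ β F) (I : Finset β)
    (hB : ∀ i ∉ I, ∀ h, B h i = 0) (c : γ → F) :
    ∑ τ : I → F, (Fintype.card {v : β → F // A *ᵥ v = 0 ∧ ∀ i : I, v i = τ i} : R) *
        ∏ h, (if ∑ i : I, B h i * τ i + c h = 0 then 1 else 0) =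
      Fintype.card {v : β → F // A *ᵥ v = 0 ∧ B *ᵥ v + c = 0} := by
  have hfiber := sum_card_fiber_mul (fun v => A *ᵥ v = 0) (fun v (i : I) => v i)
    (fun τ => ∏ h, (if ∑ i : I, B h i * τ i + c h = 0 then (1 : R) else 0))
  have hrestrict (v : β → F) (τ : I → F) : (fun i : I => v i) = τ ↔ ∀ i : I, v i = τ i :=
    funext_iff
  simp only [hrestrict] at hfiber
  rw [hfiber]
  simp only [sum_coe_mul_eq_mulVec B I hB, ← Pi.add_apply, prod_boole_eq_zero]
  rw [Finset.sum_boole, Finset.filter_filter, Fintype.card_subtype]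

end FiniteField

/-- Fact 2.1: change of nullity upon adding rows and columns, expressed via the
Boltzmann marginal `μ_{A,I}` on the set `I` of columns where `A''` has a nonzero entry. -/
theorem stmt_1 {F : Type} [Field F] [Fintype F] [DecidableEq F]
    (m n m₂ n₂ : ℕ) (q : ℕ) (hq : q = Fintype.card F)
    (A : Matrix (Fin m) (Fin n) F)
    (A'' : Matrix (Fin m₂) (Fin n) F)
    (A''' : Matrix (Fin m₂) (Fin n₂) F)
    (A' : Matrix (Fin m ⊕ Fin m₂) (Fin n ⊕ Fin n₂) F)
    (hA' : A' = Matrix.fromBlocks A 0 A'' A''')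
    (I : Finset (Fin n)) (hI : ∀ i, i ∈ I ↔ ∃ h, A'' h i ≠ 0)
    (μ : (I → F) → ℝ)
    (hμ : ∀ τ : I → F, μ τ =
      (Fintype.card {v : Fin n → F // A.mulVec v = 0 ∧ ∀ i : I, v i = τ i} : ℝ)
        / (q : ℝ) ^ nullity A) :
    (nullity A' : ℝ) - (nullity A : ℝ) =
      Real.logb q
        (∑ σ : Fin n₂ → F, ∑ τ : I → F, μ τ *
          ∏ h : Fin m₂,
            (if (∑ i : I, A'' h i * τ i) + (∑ j : Fin n₂, A''' h j * σ j) = 0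
              then (1:ℝ) else 0)) := by
  have hq1 : (1 : ℝ) < q := by rw [hq]; exact_mod_cast Fintype.one_lt_card
  have hA'' : ∀ i ∉ I, ∀ h, A'' h i = 0 := fun i hi h =>
    not_not.mp fun hne => hi ((hI i).mpr ⟨h, hne⟩)
  have hsum : (∑ σ : Fin n₂ → F, ∑ τ : I → F, μ τ *
        ∏ h : Fin m₂,
          (if (∑ i : I, A'' h i * τ i) + (∑ j : Fin n₂, A''' h j * σ j) = 0
            then (1:ℝ) else 0)) = (q : ℝ) ^ nullity A' / (q : ℝ) ^ nullity A := by
    simp_rw [hμ, div_mul_eq_mul_div, ← Finset.sum_div]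
    congr 1
    calc _ = ∑ σ : Fin n₂ → F, (Fintype.card
            {v : Fin n → F // A *ᵥ v = 0 ∧ A'' *ᵥ v + A''' *ᵥ σ = 0} : ℝ) :=
          Fintype.sum_congr _ _ fun σ => sum_card_restrict_mul_prod_boole A A'' I hA'' _
      _ = _ := by
        rw [hA', hq, ← Nat.cast_pow, ← card_mulVec_eq_zero, card_ker_fromBlocks_zero,
          Nat.cast_sum]
  rw [hsum, Real.logb_div (by positivity) (by positivity), Real.logb_pow, Real.logb_pow,
    Real.logb_self_eq_one hq1]
  ring
end

section
/- For any matrix A ∈ F_q^{m×n} there exists a partition S_0, S_1, ..., S_ℓ of [n] into pairwise disjoint sets such that: (i) if i ∈ S_0 then σ_i = 0 for all σ ∈ ker(A); (ii) if i, j ∈ S_h for some h ∈ [ℓ], then the marginal μ_{A,i} is uniform on F_q and there exists s ∈ F_q \ {0} with σ_j = s·σ_i for all σ ∈ ker(A); (iii) if i ∈ S_g and j ∈ S_h with 1 ≤ g < h ≤ ℓ, then the joint marginal μ_{A,i,j}(τ,τ') = 1/q² for all τ, τ' ∈ F_q. -/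
/-!
Restricted to `K = ker A`, the coordinates become linear functionals `fᵢ : K → F`. The frozen
class collects the `i` with `fᵢ = 0`; the other coordinates are grouped by proportionality of
the `fᵢ`, i.e. by the orbits of `Fˣ` on the dual of `K`. All fibres of a surjective additive map
have the same size, so a nonzero `fᵢ` is uniform on `F`. Two nonzero, non-proportional
functionals are linearly independent, hence `(fᵢ, fⱼ) : K → F × F` is onto and the pair is
uniform on `F × F`.
-/

open Function

theorem AddMonoidHom.card_fiber_div_card_of_surjective {G H : Type*} [AddGroup G] [AddGroup H]
    [Fintype G] [Fintype H] [DecidableEq H] (f : G →+ H) (hf : Surjective f) (y : H) :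
    (Fintype.card {g // f g = y} : ℝ) / Fintype.card G = 1 / Fintype.card H := by
  have hfiber : ∀ y', (Finset.univ.filter fun g => f g = y').card = Fintype.card {g // f g = y} :=
    fun y' => by
      rw [Fintype.card_subtype]
      exact AddMonoidHom.card_fiber_eq_of_mem_range f (hf y') (hf y)
  have hG : Fintype.card G = Fintype.card H * Fintype.card {g // f g = y} := by
    rw [← Finset.card_univ,
      Finset.card_eq_sum_card_fiberwise fun g _ => Finset.mem_coe.2 (Finset.mem_univ (f g)),
      Finset.sum_congr rfl fun y' _ => hfiber y', Finset.sum_const, Finset.card_univ, smul_eq_mul]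
  have hH : (Fintype.card H : ℝ) ≠ 0 := by exact_mod_cast Fintype.card_ne_zero
  have hfy : (Fintype.card {g // f g = y} : ℝ) ≠ 0 := by
    obtain ⟨g, hg⟩ := hf y
    exact_mod_cast (Fintype.card_pos_iff.2 ⟨(⟨g, hg⟩ : {g // f g = y})⟩).ne'
  rw [hG]
  push_cast
  field_simp

theorem LinearMap.surjective_prod_of_linearIndependent {K V : Type*} [Field K] [AddCommGroup V]
    [Module K V] {φ ψ : Module.Dual K V} (h : LinearIndependent K ![φ, ψ]) :
    Surjective (φ.prod ψ) := by
  rw [← LinearMap.dualMap_injective_iff, injective_iff_map_eq_zero]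
  intro ξ hξ
  have hξ_apply : ∀ a b : K, ξ (a, b) = a * ξ (1, 0) + b * ξ (0, 1) := by
    intro a b
    rw [show (a, b) = a • ((1 : K), (0 : K)) + b • ((0 : K), (1 : K)) by simp, map_add,
      map_smul, map_smul, smul_eq_mul, smul_eq_mul]
  have hcomb : ξ (1, 0) • φ + ξ (0, 1) • ψ = 0 := by
    ext x
    have hx := LinearMap.congr_fun hξ x
    change ξ (φ x, ψ x) = 0 at hx
    rw [hξ_apply] at hx
    simp only [LinearMap.add_apply, LinearMap.smul_apply, smul_eq_mul, LinearMap.zero_apply]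
    linear_combination hx
  obtain ⟨h10, h01⟩ := LinearIndependent.pair_iff.mp h _ _ hcomb
  refine LinearMap.prod_ext (LinearMap.ext_ring ?_) (LinearMap.ext_ring ?_) <;> simpa

theorem linearIndependent_pair_of_notMem_orbit {K V : Type*} [Field K] [AddCommGroup V]
    [Module K V] {x y : V} (hx : x ≠ 0) (hy : y ≠ 0) (h : y ∉ MulAction.orbit Kˣ x) :
    LinearIndependent K ![x, y] := by
  rw [LinearIndependent.pair_iff' hx]
  intro a ha
  rcases eq_or_ne a 0 with rfl | ha0
  · exact hy (by simpa using ha.symm)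
  · exact h ⟨Units.mk0 a ha0, ha⟩

theorem Setoid.exists_fin_succ_classifier {ι : Type*} [Finite ι] (p : ι → Prop)
    (r : Setoid ι) :
    ∃ (ℓ : ℕ) (c : ι → Fin (ℓ + 1)), (∀ i, c i = 0 ↔ p i) ∧
      ∀ i j, ¬ p i → ¬ p j → (c i = c j ↔ r i j) := by
  classical
  let Q := Quotient (r.comap (Subtype.val : {i // ¬ p i} → ι))
  have : Fintype Q := Fintype.ofFinite Q
  let e := Fintype.equivFin Q
  refine ⟨Fintype.card Q, fun i => if hi : p i then 0 else (e ⟦⟨i, hi⟩⟧).succ, ?_, ?_⟩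
  · intro i
    by_cases hi : p i <;> simp [hi, Fin.succ_ne_zero]
  · intro i j hi hj
    simp only [hi, hj, dite_false, Fin.succ_inj, e.injective.eq_iff]
    exact Quotient.eq

theorem Matrix.card_ker_fiber_div_card_ker {F V : Type*} [Field F] [Fintype F] [DecidableEq F]
    [AddCommGroup V] [Module F V] [Fintype V] [DecidableEq V] {m n : ℕ}
    (A : Matrix (Fin m) (Fin n) F) (φ : LinearMap.ker A.mulVecLin →ₗ[F] V)
    (hφ : Surjective φ) (y : V) (P : (Fin n → F) → Prop) [DecidablePred P]
    (hP : ∀ w, φ w = y ↔ P w) :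
    (Fintype.card {v // A.mulVec v = 0 ∧ P v} : ℝ) / Fintype.card {v // A.mulVec v = 0} =
      1 / Fintype.card V := by
  classical
  rw [← AddMonoidHom.card_fiber_div_card_of_surjective φ.toAddMonoidHom hφ y]
  congr 2
  · exact Fintype.card_congr <| (Equiv.subtypeSubtypeEquivSubtypeInter _ P).symm.trans
      (Equiv.subtypeEquivRight fun w => (hP w).symm)
  · exact Fintype.card_congr (Equiv.refl _)

/-- Lemma 2.2: the kernel correlation decomposition of the column set of a matrix over a
finite field.  `S 0` is the set of frozen coordinates; on each other class the marginal is
uniform and coordinates are deterministically linearly related; coordinates in distinct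
classes are independent with uniform joint marginal. -/
theorem stmt_3 {F : Type} [Field F] [Fintype F] [DecidableEq F]
    (m n : ℕ) (q : ℕ) (hq : q = Fintype.card F)
    (A : Matrix (Fin m) (Fin n) F) :
    ∃ (ℓ : ℕ) (S : Fin (ℓ + 1) → Finset (Fin n)),
      (∀ g h : Fin (ℓ + 1), g ≠ h → Disjoint (S g) (S h)) ∧
      (∀ i : Fin n, ∃ h, i ∈ S h) ∧
      -- (i) frozen class
      (∀ i ∈ S 0, ∀ v : Fin n → F, A.mulVec v = 0 → v i = 0) ∧
      -- (ii) within a non-frozen class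
      (∀ h : Fin (ℓ + 1), h ≠ 0 → ∀ i ∈ S h, ∀ j ∈ S h,
        (∀ τ : F,
          (Fintype.card {v : Fin n → F // A.mulVec v = 0 ∧ v i = τ} : ℝ)
            / (Fintype.card {v : Fin n → F // A.mulVec v = 0} : ℝ) = 1 / q) ∧
        ∃ s : F, s ≠ 0 ∧ ∀ v : Fin n → F, A.mulVec v = 0 → v j = s * v i) ∧
      -- (iii) across distinct non-frozen classes
      (∀ g h : Fin (ℓ + 1), g ≠ 0 → h ≠ 0 → g ≠ h → ∀ i ∈ S g, ∀ j ∈ S h,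
        ∀ τ τ' : F,
          (Fintype.card {v : Fin n → F // A.mulVec v = 0 ∧ v i = τ ∧ v j = τ'} : ℝ)
            / (Fintype.card {v : Fin n → F // A.mulVec v = 0} : ℝ) = 1 / (q : ℝ) ^ 2) := by
  classical
  let K := LinearMap.ker A.mulVecLin
  let f : Fin n → Module.Dual F K := fun i => LinearMap.proj i ∘ₗ K.subtype
  obtain ⟨ℓ, c, hc0, hc⟩ := Setoid.exists_fin_succ_classifier (fun i => f i = 0)
    (Setoid.comap f (MulAction.orbitRel Fˣ (Module.Dual F K)))
  have hf0 : ∀ {i h}, c i = h → h ≠ 0 → f i ≠ 0 := fun hi hh h0 =>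
    hh (hi ▸ (hc0 _).2 h0)
  refine ⟨ℓ, fun h => {i | c i = h},
    fun g h hgh => Finset.disjoint_filter.2 fun i _ hg hh => hgh (hg.symm.trans hh),
    fun i => ⟨c i, by simp⟩, ?_, ?_, ?_⟩
  · intro i hi v hv
    exact LinearMap.congr_fun ((hc0 i).1 (by simpa using hi)) ⟨v, hv⟩
  · intro h hh i hi j hj
    simp only [Finset.mem_filter, Finset.mem_univ, true_and] at hi hj
    obtain ⟨u, hu⟩ : f j ∈ MulAction.orbit Fˣ (f i) :=
      (hc j i (hf0 hj hh) (hf0 hi hh)).1 (hj.trans hi.symm)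
    refine ⟨fun τ => ?_, u, u.ne_zero, fun v hv => (LinearMap.congr_fun hu ⟨v, hv⟩).symm⟩
    rw [A.card_ker_fiber_div_card_ker (f i) (LinearMap.surjective (hf0 hi hh)) τ
      (fun v => v i = τ) fun _ => Iff.rfl, hq]
  · intro g h hg hh hgh i hi j hj τ τ'
    simp only [Finset.mem_filter, Finset.mem_univ, true_and] at hi hj
    have hij : LinearIndependent F ![f i, f j] :=
      linearIndependent_pair_of_notMem_orbit (hf0 hi hg) (hf0 hj hh)
        fun hr => hgh <| hi.symm.trans <| ((hc j i (hf0 hj hh) (hf0 hi hg)).2 hr).symm.trans hj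
    rw [A.card_ker_fiber_div_card_ker _ (LinearMap.surjective_prod_of_linearIndependent hij)
      (τ, τ') _ fun _ => Prod.ext_iff, Fintype.card_prod, hq]
    push_cast
    ring
end

section
/- Let D(x) = K(x) = (4x³ + x¹⁵)/5, so that d = k = D'(1) = 27/5, and define Φ(α) = D(1 - K'(α)/k) + (d/k)(K(α) + (1-α)K'(α) - 1). Then Φ(0) = 0, Φ(1) = 0, but there exists α ∈ (0,1) with Φ(α) > 0. -/
theorem hasDerivAt_lelarge_degreeDistribution (x : ℝ) :
    HasDerivAt (fun x : ℝ => (4 * x ^ 3 + x ^ 15) / 5) ((12 * x ^ 2 + 15 * x ^ 14) / 5) x :=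
  ((((hasDerivAt_pow 3 x).const_mul 4).add (hasDerivAt_pow 15 x)).div_const 5).congr_deriv
    (by norm_num; ring)

/-- Lelarge's counterexample (Example 1.6): for `D = K = (4x³ + x¹⁵)/5` (so
`d = k = 27/5`), the rank functional `Φ` vanishes at `0` and `1` but is strictly
positive somewhere in `(0,1)`. -/
theorem stmt_6
    (D K : ℝ → ℝ)
    (hD : ∀ x, D x = (4 * x ^ 3 + x ^ 15) / 5)
    (hK : ∀ x, K x = (4 * x ^ 3 + x ^ 15) / 5)
    (d k : ℝ) (hd : d = 27 / 5) (hk : k = 27 / 5)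
    (Φ : ℝ → ℝ)
    (hΦ : ∀ α, Φ α = D (1 - deriv K α / k) +
      (d / k) * (K α + (1 - α) * deriv K α - 1)) :
    Φ 0 = 0 ∧ Φ 1 = 0 ∧ ∃ α ∈ Set.Ioo (0:ℝ) 1, 0 < Φ α := by
  have hK' : ∀ α, deriv K α = (12 * α ^ 2 + 15 * α ^ 14) / 5 := fun α => by
    rw [funext hK]
    exact (hasDerivAt_lelarge_degreeDistribution α).deriv
  simp only [hΦ, hK', hD, hK, hd, hk]
  exact ⟨by norm_num, by norm_num, 7 / 10, by norm_num, by norm_num⟩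
end

section
/- Let K(x) = x^10 (so k = 10), let D(x) = (190x³ + 7x²⁰⁰)/197, and d = D'(1) = (570 + 1400)/197 = 1970/197 = 10. Define Φ(α) = D(1 - K'(α)/k) + (d/k)(K(α) + (1-α)K'(α) - 1). Then Φ(0) = 0 and Φ(1) = 0, but there exists α ∈ (0,1) with Φ(α) > 0. -/
/-! At `α = 4/5` the cubic term of `D` alone beats the polynomial part of `Φ` (by about `1.7·10⁻³`),
and the `x²⁰⁰` term of `D` is nonnegative. -/

/-- Example 1.7: with constant check degree `k = 10` (`K(x) = x¹⁰`) and
`D(x) = (190x³ + 7x²⁰⁰)/197` (so `d = D'(1) = 10`), the rank functional `Φ`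
vanishes at `0` and `1` but is strictly positive somewhere in `(0,1)`. -/
theorem stmt_7
    (D K : ℝ → ℝ)
    (hK : ∀ x, K x = x ^ 10)
    (hD : ∀ x, D x = (190 * x ^ 3 + 7 * x ^ 200) / 197)
    (d k : ℝ) (hd : d = 10) (hk : k = 10)
    (Φ : ℝ → ℝ)
    (hΦ : ∀ α, Φ α = D (1 - deriv K α / k) +
      (d / k) * (K α + (1 - α) * deriv K α - 1)) :
    Φ 0 = 0 ∧ Φ 1 = 0 ∧ ∃ α ∈ Set.Ioo (0:ℝ) 1, 0 < Φ α := by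
  have hK' : ∀ α, deriv K α = 10 * α ^ 9 := fun α => by
    rw [funext hK, deriv_pow_field]
    norm_num
  have hΦ_eq : ∀ α, Φ α = D (1 - α ^ 9) + (α ^ 10 + 10 * (1 - α) * α ^ 9 - 1) := fun α => by
    rw [hΦ, hK', hK, hd, hk]
    ring_nf
  have hD_cubic : 190 * (1 - (4/5 : ℝ) ^ 9) ^ 3 / 197 ≤ D (1 - (4/5) ^ 9) := by
    rw [hD]
    gcongr
    exact le_add_of_nonneg_right (by positivity)
  refine ⟨by norm_num [hΦ_eq, hD], by norm_num [hΦ_eq, hD], 4/5, by norm_num, ?_⟩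
  rw [hΦ_eq]
  norm_num at hD_cubic ⊢
  linarith
end

section
/- Define h_r(x) = Σ_{j≥r} x^j/j! for integers r ≥ 0 (and h_r(x) = e^x for r < 0). Then for r ≥ 3 and λ > 0, the function t ↦ h_{r-2}(λt)/h_{r-3}(λt) = 1 - (λt)^{r-3}/((r-3)!·h_{r-3}(λt)) is increasing in t on (0, ∞). -/
/-!
Write `h_m(x) = x^m g_m(x)` with `g_m(x) = ∑ₖ xᵏ/(m+k)!`. Then `h_{m+1} = h_m - x^m/m!`, so
`h_{m+1}/h_m = 1 - 1/(m! g_m)`, and `g_m` is positive and strictly increasing on `[0, ∞)` since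
all its coefficients are positive.
-/

open scoped Nat

/-- The tail of the exponential series starting at index `r`. -/
noncomputable def expTail (r : ℕ) (x : ℝ) : ℝ := ∑' j : ℕ, if r ≤ j then x ^ j / (j !) else 0

noncomputable def expTailDivPow (m : ℕ) (x : ℝ) : ℝ := ∑' k : ℕ, x ^ k / ((m + k)! : ℝ)

lemma summable_pow_div_factorial_add (m : ℕ) (x : ℝ) :
    Summable fun k : ℕ => x ^ k / ((m + k)! : ℝ) := by
  refine Summable.of_norm_bounded (Real.summable_pow_div_factorial |x|) fun k => ?_
  rw [norm_div, norm_pow, Real.norm_eq_abs, Real.norm_eq_abs, Nat.abs_cast]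
  gcongr
  omega

lemma expTailDivPow_eq_add (m : ℕ) (x : ℝ) :
    expTailDivPow m x = 1 / (m ! : ℝ) + x * expTailDivPow (m + 1) x := by
  rw [expTailDivPow, (summable_pow_div_factorial_add m x).tsum_eq_zero_add, expTailDivPow,
    ← tsum_mul_left]
  congr 1
  refine tsum_congr fun k => ?_
  rw [pow_succ', mul_div_assoc, Nat.add_right_comm, Nat.add_assoc]

lemma expTailDivPow_pos (m : ℕ) {x : ℝ} (hx : 0 ≤ x) : 0 < expTailDivPow m x :=
  (summable_pow_div_factorial_add m x).tsum_pos (fun k => by positivity) 0 (by simp; positivity)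

lemma strictMonoOn_expTailDivPow (m : ℕ) : StrictMonoOn (expTailDivPow m) (Set.Ici 0) := by
  intro x (hx : 0 ≤ x) y _ hxy
  refine Summable.tsum_lt_tsum (i := 1) (fun k => ?_) ?_
    (summable_pow_div_factorial_add m x) (summable_pow_div_factorial_add m y)
  · gcongr
  · simpa using div_lt_div_of_pos_right hxy (by positivity)

lemma expTail_eq_pow_mul (m : ℕ) (x : ℝ) : expTail m x = x ^ m * expTailDivPow m x := by
  rw [expTail, expTailDivPow, ← tsum_mul_left,
    ← (add_left_injective m).tsum_eq (f := fun j : ℕ => if m ≤ j then x ^ j / (j ! : ℝ) else 0)]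
  · refine tsum_congr fun k => ?_
    rw [if_pos (Nat.le_add_left m k), Nat.add_comm, pow_add]
    ring
  · intro j hj
    have hmj : m ≤ j := by
      by_contra h
      exact hj (if_neg h)
    exact ⟨j - m, Nat.sub_add_cancel hmj⟩

lemma expTail_succ (m : ℕ) (x : ℝ) : expTail (m + 1) x = expTail m x - x ^ m / (m ! : ℝ) := by
  rw [expTail_eq_pow_mul, expTail_eq_pow_mul, expTailDivPow_eq_add m x]
  ring

lemma expTail_pos (m : ℕ) {x : ℝ} (hx : 0 < x) : 0 < expTail m x := by
  rw [expTail_eq_pow_mul]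
  exact mul_pos (pow_pos hx m) (expTailDivPow_pos m hx.le)

lemma expTail_succ_div_expTail (m : ℕ) {x : ℝ} (hx : 0 < x) :
    expTail (m + 1) x / expTail m x = 1 - x ^ m / ((m ! : ℝ) * expTail m x) := by
  have := expTail_pos m hx
  rw [expTail_succ]
  field_simp

lemma expTail_succ_div_expTail_eq_one_sub_inv (m : ℕ) {x : ℝ} (hx : 0 < x) :
    expTail (m + 1) x / expTail m x = 1 - ((m ! : ℝ) * expTailDivPow m x)⁻¹ := by
  have := pow_pos hx m
  rw [expTail_succ_div_expTail m hx, expTail_eq_pow_mul]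
  field_simp

lemma strictMonoOn_expTail_succ_div_expTail (m : ℕ) :
    StrictMonoOn (fun x => expTail (m + 1) x / expTail m x) (Set.Ioi 0) := by
  intro x (hx : 0 < x) y (hy : 0 < y) hxy
  dsimp only
  rw [expTail_succ_div_expTail_eq_one_sub_inv m hx, expTail_succ_div_expTail_eq_one_sub_inv m hy]
  have := expTailDivPow_pos m hx.le
  gcongr
  exact strictMonoOn_expTailDivPow m hx.le (hx.trans hxy).le hxy

/-- Case A2 of Theorem 1.4: for `r ≥ 3` and `λ > 0`, the ratio
`t ↦ h_{r-2}(λt)/h_{r-3}(λt)` equals `1 - (λt)^{r-3}/((r-3)!·h_{r-3}(λt))` and is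
strictly increasing on `(0,∞)`. -/
theorem stmt_11 (r : ℕ) (hr : 3 ≤ r) (lam : ℝ) (hlam : 0 < lam) :
    (∀ t : ℝ, 0 < t →
      expTail (r - 2) (lam * t) / expTail (r - 3) (lam * t) =
        1 - (lam * t) ^ (r - 3) / (((r - 3)! : ℝ) * expTail (r - 3) (lam * t))) ∧
    StrictMonoOn (fun t => expTail (r - 2) (lam * t) / expTail (r - 3) (lam * t))
      (Set.Ioi (0:ℝ)) := by
  obtain ⟨m, rfl⟩ : ∃ m, r = m + 3 := ⟨r - 3, by omega⟩
  simp only [Nat.add_sub_cancel, show m + 3 - 2 = m + 1 by omega]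
  have hmaps : Set.MapsTo (lam * ·) (Set.Ioi 0) (Set.Ioi 0) := fun t ht => mul_pos hlam ht
  exact ⟨fun t ht => expTail_succ_div_expTail m (hmaps ht),
    (strictMonoOn_expTail_succ_div_expTail m).comp
      ((strictMono_mul_left_of_pos hlam).strictMonoOn _) hmaps⟩
end

section
/- Let A ∈ F_q^{m×n}, let U ⊆ [n] be nonempty, and for t ≥ 0 let R_0(t), ..., R_{ℓ(t)}(t) denote the intersection with U of the kernel correlation classes of the matrix A[i_1,...,i_t] obtained by pinning uniformly random coordinates i_1, ..., i_t ∈ U to zero. Define Δ_t = |R_0(t)| - |R_0(t-1)|. Then Δ_t ≥ 0, Σ_{t=1}^Θ Δ_t ≤ |U| for any Θ, and E[Δ_t | i_1,...,i_{t-1}] ≥ Σ_{h≥1} |R_h(t-1)|²/|U|. -/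
/-!
Pinning more coordinates shrinks the kernel, so the frozen set only grows; being a subset of `U`
its size is bounded by `|U|`, and the increments telescope. For the expectation, pinning any
`x ∈ R_h` freezes all of `R_h`, which was disjoint from the frozen set, so that pin gains at
least `|R_h|`; summing over `x ∈ R_h` and over the disjoint classes gives `Σ_h |R_h|²`.
-/

open scoped BigOperators

/-- The coordinates of `[n]` frozen to zero by the kernel of `A` after pinning the
coordinates in the list `P` to zero. -/
def frozenSet {F : Type*} [Field F] {m n : ℕ} (A : Matrix (Fin m) (Fin n) F)
    (P : List (Fin n)) : Set (Fin n) :=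
  {j | ∀ σ : Fin n → F, A.mulVec σ = 0 → (∀ p ∈ P, σ p = 0) → σ j = 0}

section Frozen

variable {F : Type*} [Field F] {m n : ℕ} (A : Matrix (Fin m) (Fin n) F)

lemma frozenSet_mono {P Q : List (Fin n)} (h : P ⊆ Q) : frozenSet A P ⊆ frozenSet A Q :=
  fun _ hj σ hσ hQ => hj σ hσ fun p hp => hQ p (h hp)

lemma ncard_frozenSet_inter_mono {P Q : List (Fin n)} (h : P ⊆ Q) (U : Set (Fin n)) :
    (frozenSet A P ∩ U).ncard ≤ (frozenSet A Q ∩ U).ncard :=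
  Set.ncard_le_ncard (Set.inter_subset_inter_left U (frozenSet_mono A h)) (Set.toFinite _)

lemma ncard_frozenSet_inter_add_card_le (P : List (Fin n)) (x : Fin n) {U S : Finset (Fin n)}
    (hSU : S ⊆ U) (hS : ∀ j ∈ S, j ∉ frozenSet A P) (hSx : ∀ j ∈ S, j ∈ frozenSet A (x :: P)) :
    (frozenSet A P ∩ ↑U).ncard + S.card ≤ (frozenSet A (x :: P) ∩ ↑U).ncard := by
  have hdisj : Disjoint (frozenSet A P ∩ ↑U) (↑S : Set (Fin n)) :=
    Set.disjoint_left.mpr fun j hj hjS => hS j hjS hj.1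
  have hsub : frozenSet A P ∩ ↑U ∪ ↑S ⊆ frozenSet A (x :: P) ∩ ↑U :=
    Set.union_subset
      (Set.inter_subset_inter_left _ (frozenSet_mono A (List.subset_cons_self x P)))
      fun j hj => ⟨hSx j hj, hSU hj⟩
  rw [← Set.ncard_coe_finset S, ← Set.ncard_union_eq hdisj (Set.toFinite _) (Set.toFinite _)]
  exact Set.ncard_le_ncard hsub (Set.toFinite _)

end Frozen

lemma Finset.sum_card_sq_le_sum_of_card_le {α ι : Type*} [DecidableEq α] [Fintype ι]
    {U : Finset α} {R : ι → Finset α} (f : α → ℝ) (hRU : ∀ h, R h ⊆ U)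
    (hdisj : ∀ g h, g ≠ h → Disjoint (R g) (R h)) (hf : ∀ x ∈ U, 0 ≤ f x)
    (hR : ∀ h, ∀ x ∈ R h, ((R h).card : ℝ) ≤ f x) :
    ∑ h, ((R h).card : ℝ) ^ 2 ≤ ∑ x ∈ U, f x :=
  calc ∑ h, ((R h).card : ℝ) ^ 2 = ∑ h, ∑ _x ∈ R h, ((R h).card : ℝ) := by
        simp only [Finset.sum_const, nsmul_eq_mul, sq]
    _ ≤ ∑ h, ∑ x ∈ R h, f x := Finset.sum_le_sum fun h _ => Finset.sum_le_sum (hR h)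
    _ = ∑ x ∈ Finset.univ.biUnion R, f x :=
        (Finset.sum_biUnion fun g _ h _ hgh => hdisj g h hgh).symm
    _ ≤ ∑ x ∈ U, f x :=
        Finset.sum_le_sum_of_subset_of_nonneg
          (Finset.biUnion_subset.mpr fun h _ => hRU h) fun x hx _ => hf x hx

theorem stmt_15_general {F : Type} [Field F]
    (m n : ℕ) (A : Matrix (Fin m) (Fin n) F)
    (U : Finset (Fin n))
    -- the sequence of uniform pins and the associated frozen counts
    (i : ℕ → Fin n)
    (P : ℕ → List (Fin n)) (hP : ∀ t, P t = (List.range t).map i)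
    (N : ℕ → ℕ) (hN : ∀ t, N t = (frozenSet A (P t) ∩ ↑U).ncard)
    -- the non-frozen correlation classes after `t-1` pins, for the expectation bound
    (pins : List (Fin n)) (ℓ : ℕ) (R : Fin ℓ → Finset (Fin n))
    (hRU : ∀ h, R h ⊆ U)
    (hRdisj : ∀ g h : Fin ℓ, g ≠ h → Disjoint (R g) (R h))
    (hRnonfrozen : ∀ h : Fin ℓ, ∀ j ∈ R h, j ∉ frozenSet A pins)
    (hRclass : ∀ h : Fin ℓ, ∀ x ∈ R h, ∀ j ∈ R h, j ∈ frozenSet A (x :: pins)) :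
    (∀ t : ℕ, N t ≤ N (t + 1)) ∧
    (∀ Θ : ℕ, ∑ t ∈ Finset.range Θ, ((N (t + 1) : ℤ) - (N t : ℤ)) ≤ U.card) ∧
    ((1 / (U.card : ℝ)) * ∑ x ∈ U,
        (((frozenSet A (x :: pins) ∩ ↑U).ncard : ℝ) - ((frozenSet A pins ∩ ↑U).ncard : ℝ))
      ≥ (∑ h : Fin ℓ, ((R h).card : ℝ) ^ 2) / (U.card : ℝ)) := by
  have hN_le_card (t : ℕ) : N t ≤ U.card := by
    rw [hN t, ← Set.ncard_coe_finset U]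
    exact Set.ncard_le_ncard Set.inter_subset_right (Set.toFinite _)
  refine ⟨fun t => ?_, fun Θ => ?_, ?_⟩
  · rw [hN, hN, hP, hP, List.range_succ, List.map_append]
    exact ncard_frozenSet_inter_mono A (List.subset_append_left _ _) _
  · rw [Finset.sum_range_sub (fun t => (N t : ℤ))]
    have := hN_le_card Θ
    omega
  · have hsum := Finset.sum_card_sq_le_sum_of_card_le
      (fun x => ((frozenSet A (x :: pins) ∩ ↑U).ncard : ℝ) - ((frozenSet A pins ∩ ↑U).ncard : ℝ))
      hRU hRdisj
      (fun x _ => sub_nonneg.mpr <| mod_cast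
        ncard_frozenSet_inter_mono A (List.subset_cons_self x pins) _)
      (fun h x hx => le_sub_iff_add_le'.mpr <| mod_cast
        ncard_frozenSet_inter_add_card_le A pins x (hRU h) (hRnonfrozen h) (hRclass h x hx))
    rw [ge_iff_le, one_div_mul_eq_div]
    exact div_le_div_of_nonneg_right hsum (Nat.cast_nonneg _)

/-- The basic estimates on the pinning process: with `N t = |R₀(t)|` the number of
frozen coordinates in `U` after `t` pins and `Δ_t = N t - N (t-1)`, one has `Δ_t ≥ 0`,
`Σ_{t=1}^Θ Δ_t ≤ |U|`, and the conditional expectation of the next increment, over a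
uniform pin in `U`, is at least `Σ_{h≥1} |R_h|²/|U|` for the non-frozen correlation
classes `R_h` of the current pinned matrix. -/
theorem stmt_15 {F : Type} [Field F] [Fintype F] [DecidableEq F]
    (m n : ℕ) (A : Matrix (Fin m) (Fin n) F)
    (U : Finset (Fin n)) (hU : U.Nonempty)
    -- the sequence of uniform pins and the associated frozen counts
    (i : ℕ → Fin n) (hiU : ∀ t, i t ∈ U)
    (P : ℕ → List (Fin n)) (hP : ∀ t, P t = (List.range t).map i)
    (N : ℕ → ℕ) (hN : ∀ t, N t = (frozenSet A (P t) ∩ ↑U).ncard)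
    -- the non-frozen correlation classes after `t-1` pins, for the expectation bound
    (pins : List (Fin n)) (ℓ : ℕ) (R : Fin ℓ → Finset (Fin n))
    (hRU : ∀ h, R h ⊆ U)
    (hRdisj : ∀ g h : Fin ℓ, g ≠ h → Disjoint (R g) (R h))
    (hRnonfrozen : ∀ h : Fin ℓ, ∀ j ∈ R h, j ∉ frozenSet A pins)
    (hRcover : ∀ j ∈ U, j ∉ frozenSet A pins → ∃ h, j ∈ R h)
    (hRclass : ∀ h : Fin ℓ, ∀ x ∈ R h, ∀ j ∈ R h, j ∈ frozenSet A (x :: pins)) :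
    (∀ t : ℕ, N t ≤ N (t + 1)) ∧
    (∀ Θ : ℕ, ∑ t ∈ Finset.range Θ, ((N (t + 1) : ℤ) - (N t : ℤ)) ≤ U.card) ∧
    ((1 / (U.card : ℝ)) * ∑ x ∈ U,
        (((frozenSet A (x :: pins) ∩ ↑U).ncard : ℝ) - ((frozenSet A pins ∩ ↑U).ncard : ℝ))
      ≥ (∑ h : Fin ℓ, ((R h).card : ℝ) ^ 2) / (U.card : ℝ)) :=
  stmt_15_general m n A U i P hP N hN pins ℓ R hRU hRdisj hRnonfrozen hRclass
end

section
/- Let A ∈ F_q^{m×n}, U ⊆ [n] nonempty, and ε ∈ (0,1). Choose Θ ≥ 2/ε³, draw θ uniformly from [Θ] and i_1, ..., i_θ uniformly and independently from U, and let = A[i_1,...,i_θ]. Then E[Σ_{h≥1} |R_h(θ)|²] ≤ (2/Θ)·|U|², where R_h(θ) are the intersections with U of the non-frozen kernel correlation classes of Â. -/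
open scoped BigOperators

/-- The number of ordered pairs of non-frozen, linearly correlated coordinates of `U`
for the pinned matrix; this equals `Σ_{h ≥ 1} |R_h|²` for the non-frozen kernel
correlation classes `R_h = S_h ∩ U`. -/
noncomputable def corrPairs {F : Type*} [Field F] {m n : ℕ}
    (A : Matrix (Fin m) (Fin n) F) (P : List (Fin n)) (U : Finset (Fin n)) : ℕ :=
  Set.ncard {p : Fin n × Fin n | p.1 ∈ U ∧ p.2 ∈ U ∧
    p.1 ∉ frozenSet A P ∧ p.2 ∉ frozenSet A P ∧
    ∃ s : F, s ≠ 0 ∧ ∀ σ : Fin n → F, A.mulVec σ = 0 → (∀ q ∈ P, σ q = 0) →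
      σ p.2 = s * σ p.1}

section Aux
variable {F : Type*} [Field F] {m n : ℕ}

lemma frozen_append (A : Matrix (Fin m) (Fin n) F) (P Q : List (Fin n)) :
    frozenSet A P ⊆ frozenSet A (P ++ Q) := by
  intro j hj σ hker hpin
  exact hj σ hker (fun p hp => hpin p (by simp [hp]))

/-- `frozenSet` depends on `P` only via membership. -/
lemma frozen_congr (A : Matrix (Fin m) (Fin n) F) {P Q : List (Fin n)}
    (h : ∀ q, q ∈ P ↔ q ∈ Q) : frozenSet A P = frozenSet A Q := by
  ext j
  constructor <;> intro hj σ hker hpin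
  · exact hj σ hker (fun p hp => hpin p ((h p).1 hp))
  · exact hj σ hker (fun p hp => hpin p ((h p).2 hp))

open Classical in
/-- Indicator that `a` is not frozen. -/
noncomputable def aliveN (A : Matrix (Fin m) (Fin n) F) (P : List (Fin n))
    (a : Fin n) : ℕ :=
  if a ∈ frozenSet A P then 0 else 1

lemma aliveN_le_one (A : Matrix (Fin m) (Fin n) F) (P : List (Fin n)) (a : Fin n) :
    aliveN A P a ≤ 1 := by
  unfold aliveN; split <;> omega

lemma aliveN_congr (A : Matrix (Fin m) (Fin n) F) {P Q : List (Fin n)}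
    (h : ∀ q, q ∈ P ↔ q ∈ Q) (a : Fin n) : aliveN A P a = aliveN A Q a := by
  unfold aliveN; rw [frozen_congr A h]

open Classical in
/-- The slice of the correlated-pairs set at first coordinate `a`. -/
noncomputable def sliceF (A : Matrix (Fin m) (Fin n) F) (P : List (Fin n))
    (U : Finset (Fin n)) (a : Fin n) : Finset (Fin n) :=
  U.filter (fun b => a ∉ frozenSet A P ∧ b ∉ frozenSet A P ∧
    ∃ s : F, s ≠ 0 ∧ ∀ σ : Fin n → F, A.mulVec σ = 0 → (∀ q ∈ P, σ q = 0) →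
      σ b = s * σ a)

lemma sliceF_congr (A : Matrix (Fin m) (Fin n) F) {P Q : List (Fin n)}
    (h : ∀ q, q ∈ P ↔ q ∈ Q) (U : Finset (Fin n)) (a : Fin n) :
    sliceF A P U a = sliceF A Q U a := by
  classical
  unfold sliceF
  apply Finset.filter_congr
  intro b _
  rw [frozen_congr A h]
  constructor <;> rintro ⟨h1, h2, s, hs, hcor⟩
  · exact ⟨h1, h2, s, hs, fun σ hker hpin => hcor σ hker (fun q hq => hpin q ((h q).1 hq))⟩
  · exact ⟨h1, h2, s, hs, fun σ hker hpin => hcor σ hker (fun q hq => hpin q ((h q).2 hq))⟩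

lemma sliceF_subset (A : Matrix (Fin m) (Fin n) F) (P : List (Fin n))
    (U : Finset (Fin n)) (a : Fin n) : sliceF A P U a ⊆ U := by
  classical
  unfold sliceF; exact Finset.filter_subset _ _

lemma corrPairs_eq_sum (A : Matrix (Fin m) (Fin n) F) (P : List (Fin n))
    (U : Finset (Fin n)) :
    corrPairs A P U = ∑ a ∈ U, (sliceF A P U a).card := by
  classical
  unfold corrPairs
  have hset : {p : Fin n × Fin n | p.1 ∈ U ∧ p.2 ∈ U ∧
      p.1 ∉ frozenSet A P ∧ p.2 ∉ frozenSet A P ∧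
      ∃ s : F, s ≠ 0 ∧ ∀ σ : Fin n → F, A.mulVec σ = 0 → (∀ q ∈ P, σ q = 0) →
        σ p.2 = s * σ p.1}
      = ↑((U ×ˢ U).filter (fun p : Fin n × Fin n =>
          p.1 ∉ frozenSet A P ∧ p.2 ∉ frozenSet A P ∧
          ∃ s : F, s ≠ 0 ∧ ∀ σ : Fin n → F, A.mulVec σ = 0 →
            (∀ q ∈ P, σ q = 0) → σ p.2 = s * σ p.1)) := by
    ext p
    simp [Finset.mem_filter, Finset.mem_product, Set.mem_setOf_eq, and_assoc]
  rw [hset, Set.ncard_coe_finset]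
  rw [Finset.card_eq_sum_card_fiberwise (f := Prod.fst) (t := U)
    (fun p hp => by simp only [Finset.mem_coe, Finset.mem_filter, Finset.mem_product] at hp; exact hp.1.1)]
  refine Finset.sum_congr rfl fun a ha => ?_
  refine Finset.card_bij' (fun p _ => p.2) (fun b _ => (a, b)) ?_ ?_ ?_ ?_
  · intro p hp
    simp only [Finset.mem_filter, Finset.mem_product] at hp
    obtain ⟨⟨⟨h1, h2⟩, h3⟩, h4⟩ := hp
    subst h4
    simp only [sliceF, Finset.mem_filter]
    exact ⟨h2, h3⟩
  · intro b hb
    simp only [sliceF, Finset.mem_filter] at hb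
    simp only [Finset.mem_filter, Finset.mem_product]
    exact ⟨⟨⟨ha, hb.1⟩, hb.2⟩, trivial⟩
  · intro p hp
    simp only [Finset.mem_filter] at hp
    obtain ⟨-, h4⟩ := hp
    exact Prod.ext h4.symm rfl
  · intro b hb
    rfl

/-- Pinning a coordinate correlated with `a` freezes `a`. -/
lemma kill (A : Matrix (Fin m) (Fin n) F) (P : List (Fin n)) (U : Finset (Fin n))
    (a : Fin n) {i : Fin n} (hi : i ∈ sliceF A P U a) :
    a ∈ frozenSet A (P ++ [i]) := by
  simp only [sliceF, Finset.mem_filter] at hi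
  obtain ⟨-, -, -, s, hs, hcor⟩ := hi
  intro σ hker hpin
  have hP : ∀ q ∈ P, σ q = 0 := fun q hq => hpin q (by simp [hq])
  have hI : σ i = 0 := hpin i (by simp)
  have := hcor σ hker hP
  rw [hI] at this
  rcases mul_eq_zero.1 this.symm with h | h
  · exact absurd h hs
  · exact h

/-- One-step inequality: pinning a uniform element of `U` kills `a` at rate at least
the slice count. -/
lemma step_point (A : Matrix (Fin m) (Fin n) F) (P : List (Fin n))
    (U : Finset (Fin n)) (a : Fin n) :
    (∑ i ∈ U, aliveN A (P ++ [i]) a) + (sliceF A P U a).card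
      ≤ U.card * aliveN A P a := by
  classical
  by_cases hf : a ∈ frozenSet A P
  · have h1 : ∀ i ∈ U, aliveN A (P ++ [i]) a = 0 := by
      intro i _
      simp only [aliveN, if_pos (frozen_append A P [i] hf)]
    have h2 : (sliceF A P U a).card = 0 := by
      rw [Finset.card_eq_zero]
      ext b
      simp only [sliceF, Finset.mem_filter, Finset.notMem_empty, iff_false]
      rintro ⟨-, h, -⟩
      exact h hf
    rw [Finset.sum_congr rfl h1, h2]
    simp [aliveN, hf]
  · have ha1 : aliveN A P a = 1 := by simp [aliveN, hf]
    rw [ha1, mul_one]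
    have hcard : (sliceF A P U a).card
        = ∑ i ∈ U, (if i ∈ sliceF A P U a then 1 else 0) := by
      rw [Finset.sum_ite_mem, Finset.inter_eq_right.2 (sliceF_subset A P U a)]
      simp
    rw [hcard, ← Finset.sum_add_distrib]
    calc (∑ i ∈ U, (aliveN A (P ++ [i]) a + if i ∈ sliceF A P U a then 1 else 0))
        ≤ ∑ i ∈ U, 1 := by
          refine Finset.sum_le_sum fun i hi => ?_
          by_cases hk : i ∈ sliceF A P U a
          · have : aliveN A (P ++ [i]) a = 0 := by
              simp [aliveN, if_pos (kill A P U a hk)]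
            simp [this, hk]
          · simp only [if_neg hk, add_zero]
            exact aliveN_le_one A _ a
      _ = U.card := by simp

variable (A : Matrix (Fin m) (Fin n) F) (U : Finset (Fin n))

/-- The list of pins given by a tuple of elements of `U`. -/
def pinsOf {θ : ℕ} (is : Fin θ → {x // x ∈ U}) : List (Fin n) :=
  List.ofFn (fun j : Fin θ => (is j : Fin n))

/-- Total aliveness over all pin tuples of length `θ`. -/
noncomputable def AAn (a : Fin n) (θ : ℕ) : ℕ :=
  ∑ is : Fin θ → {x // x ∈ U}, aliveN A (pinsOf U is) a

/-- Total slice count over all pin tuples of length `θ`. -/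
noncomputable def NNn (a : Fin n) (θ : ℕ) : ℕ :=
  ∑ is : Fin θ → {x // x ∈ U}, (sliceF A (pinsOf U is) U a).card

lemma pinsOf_cons {θ : ℕ} (i : {x // x ∈ U}) (is : Fin θ → {x // x ∈ U}) :
    pinsOf U (Fin.cons i is : Fin (θ + 1) → {x // x ∈ U}) = (i : Fin n) :: pinsOf U is := by
  unfold pinsOf
  rw [List.ofFn_succ]
  simp

lemma AAn_zero_le_one (a : Fin n) : AAn A U a 0 ≤ 1 := by
  classical
  unfold AAn
  have := Finset.sum_le_card_nsmul Finset.univ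
    (fun is : Fin 0 → {x // x ∈ U} => aliveN A (pinsOf U is) a) 1
    (fun x _ => aliveN_le_one A _ a)
  simpa using this

lemma NNn_le (a : Fin n) (θ : ℕ) : NNn A U a θ ≤ U.card ^ θ * U.card := by
  classical
  unfold NNn
  calc ∑ is : Fin θ → {x // x ∈ U}, (sliceF A (pinsOf U is) U a).card
      ≤ ∑ _is : Fin θ → {x // x ∈ U}, U.card :=
        Finset.sum_le_sum (fun is _ => Finset.card_le_card (sliceF_subset A _ U a))
    _ = U.card ^ θ * U.card := by
        rw [Finset.sum_const, Finset.card_univ, Fintype.card_fun]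
        simp [Fintype.card_coe, Fintype.card_fin, smul_eq_mul]

/-- The chain step: the total over `θ+1` pins. -/
lemma chain_step (a : Fin n) (θ : ℕ) :
    AAn A U a (θ + 1) + NNn A U a θ ≤ U.card * AAn A U a θ := by
  classical
  have hre : AAn A U a (θ + 1)
      = ∑ is : Fin θ → {x // x ∈ U}, ∑ i ∈ U, aliveN A (pinsOf U is ++ [i]) a := by
    unfold AAn
    rw [← (Fin.consEquiv (fun _ : Fin (θ + 1) => {x // x ∈ U})).sum_comp
      (fun g => aliveN A (pinsOf U g) a)]
    rw [Fintype.sum_prod_type]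
    rw [Finset.sum_comm]
    refine Finset.sum_congr rfl fun is _ => ?_
    rw [← Finset.sum_coe_sort U (fun i => aliveN A (pinsOf U is ++ [i]) a)]
    refine Finset.sum_congr rfl fun i _ => ?_
    have hmem : ∀ q, q ∈ pinsOf U (Fin.cons i is : Fin (θ + 1) → {x // x ∈ U})
        ↔ q ∈ pinsOf U is ++ [(i : Fin n)] := by
      intro q
      rw [pinsOf_cons]
      simp [or_comm]
    exact aliveN_congr A hmem a
  rw [hre]
  unfold NNn
  rw [← Finset.sum_add_distrib]
  unfold AAn
  rw [Finset.mul_sum]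
  exact Finset.sum_le_sum fun is _ => step_point A (pinsOf U is) U a

/-- Telescoping bound on the normalized slice counts. -/
lemma telescope (hU : U.Nonempty) (a : Fin n) (k : ℕ) :
    (∑ θ ∈ Finset.range k, (NNn A U a θ : ℝ) / (U.card : ℝ) ^ θ)
      + (U.card : ℝ) * ((AAn A U a k : ℝ) / (U.card : ℝ) ^ k)
      ≤ (U.card : ℝ) * (AAn A U a 0 : ℝ) := by
  have hu : (0 : ℝ) < (U.card : ℝ) := by
    exact_mod_cast Finset.card_pos.2 hU
  induction k with
  | zero => simp
  | succ k ih =>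
    have hstep : (AAn A U a (k + 1) : ℝ) + (NNn A U a k : ℝ)
        ≤ (U.card : ℝ) * (AAn A U a k : ℝ) := by
      exact_mod_cast chain_step A U a k
    have hdiv : (AAn A U a (k + 1) : ℝ) / (U.card : ℝ) ^ k
        + (NNn A U a k : ℝ) / (U.card : ℝ) ^ k
        ≤ (U.card : ℝ) * ((AAn A U a k : ℝ) / (U.card : ℝ) ^ k) := by
      rw [← add_div, ← mul_div_assoc]
      exact (div_le_div_iff_of_pos_right (by positivity)).2 hstep
    have hpow : (U.card : ℝ) * ((AAn A U a (k + 1) : ℝ) / (U.card : ℝ) ^ (k + 1))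
        = (AAn A U a (k + 1) : ℝ) / (U.card : ℝ) ^ k := by
      rw [pow_succ]
      field_simp
    rw [Finset.sum_range_succ]
    calc (∑ θ ∈ Finset.range k, (NNn A U a θ : ℝ) / (U.card : ℝ) ^ θ)
          + (NNn A U a k : ℝ) / (U.card : ℝ) ^ k
          + (U.card : ℝ) * ((AAn A U a (k + 1) : ℝ) / (U.card : ℝ) ^ (k + 1))
        = (∑ θ ∈ Finset.range k, (NNn A U a θ : ℝ) / (U.card : ℝ) ^ θ)
          + ((AAn A U a (k + 1) : ℝ) / (U.card : ℝ) ^ k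
            + (NNn A U a k : ℝ) / (U.card : ℝ) ^ k) := by rw [hpow]; ring
      _ ≤ (∑ θ ∈ Finset.range k, (NNn A U a θ : ℝ) / (U.card : ℝ) ^ θ)
          + (U.card : ℝ) * ((AAn A U a k : ℝ) / (U.card : ℝ) ^ k) := by
            exact add_le_add (le_refl _) hdiv
      _ ≤ (U.card : ℝ) * (AAn A U a 0 : ℝ) := ih

/-- Per-coordinate bound on the window `[1, Θ]`. -/
lemma window_bound (hU : U.Nonempty) (a : Fin n) (Θ : ℕ) :
    (∑ θ ∈ Finset.Icc 1 Θ, (NNn A U a θ : ℝ) / (U.card : ℝ) ^ θ)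
      ≤ 2 * (U.card : ℝ) := by
  have hu : (0 : ℝ) < (U.card : ℝ) := by
    exact_mod_cast Finset.card_pos.2 hU
  have hsub : Finset.Icc 1 Θ ⊆ Finset.range (Θ + 1) := by
    intro x hx
    simp only [Finset.mem_Icc] at hx
    simp only [Finset.mem_range]
    omega
  have h1 : (∑ θ ∈ Finset.Icc 1 Θ, (NNn A U a θ : ℝ) / (U.card : ℝ) ^ θ)
      ≤ ∑ θ ∈ Finset.range (Θ + 1), (NNn A U a θ : ℝ) / (U.card : ℝ) ^ θ :=
    Finset.sum_le_sum_of_subset_of_nonneg hsub (fun θ _ _ => by positivity)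
  have h2 : (∑ θ ∈ Finset.range Θ, (NNn A U a θ : ℝ) / (U.card : ℝ) ^ θ)
      ≤ (U.card : ℝ) := by
    have := telescope A U hU a Θ
    have hA0 : (AAn A U a 0 : ℝ) ≤ 1 := by exact_mod_cast AAn_zero_le_one A U a
    nlinarith [mul_nonneg hu.le (div_nonneg (Nat.cast_nonneg (AAn A U a Θ))
      (pow_nonneg hu.le Θ))]
  have h3 : (NNn A U a Θ : ℝ) / (U.card : ℝ) ^ Θ ≤ (U.card : ℝ) := by
    rw [div_le_iff₀ (by positivity)]
    calc (NNn A U a Θ : ℝ) ≤ ((U.card ^ Θ * U.card : ℕ) : ℝ) := by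
          exact_mod_cast NNn_le A U a Θ
      _ = (U.card : ℝ) * (U.card : ℝ) ^ Θ := by push_cast; ring
  calc (∑ θ ∈ Finset.Icc 1 Θ, (NNn A U a θ : ℝ) / (U.card : ℝ) ^ θ)
      ≤ ∑ θ ∈ Finset.range (Θ + 1), (NNn A U a θ : ℝ) / (U.card : ℝ) ^ θ := h1
    _ = (∑ θ ∈ Finset.range Θ, (NNn A U a θ : ℝ) / (U.card : ℝ) ^ θ)
        + (NNn A U a Θ : ℝ) / (U.card : ℝ) ^ Θ := Finset.sum_range_succ _ _
    _ ≤ (U.card : ℝ) + (U.card : ℝ) := add_le_add h2 h3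
    _ = 2 * (U.card : ℝ) := by ring

end Aux

/-- The pinning lemma in expectation: pinning a uniformly random number `θ ∈ [Θ]` of
uniformly random coordinates of `U` to zero makes the expected sum of squared sizes of
the non-frozen correlation classes at most `(2/Θ)|U|²`. -/
theorem stmt_16 {F : Type} [Field F] [Fintype F] [DecidableEq F]
    (m n : ℕ) (A : Matrix (Fin m) (Fin n) F)
    (U : Finset (Fin n)) (hU : U.Nonempty)
    (ε : ℝ) (hε : ε ∈ Set.Ioo (0:ℝ) 1)
    (Θ : ℕ) (hΘ : 2 / ε ^ 3 ≤ (Θ : ℝ)) :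
    (1 / (Θ : ℝ)) * ∑ θ ∈ Finset.Icc 1 Θ,
        ((1 / (U.card : ℝ) ^ θ) *
          ∑ is : Fin θ → {x // x ∈ U},
            (corrPairs A (List.ofFn (fun j : Fin θ => (is j : Fin n))) U : ℝ))
      ≤ (2 / (Θ : ℝ)) * (U.card : ℝ) ^ 2 := by
  classical
  have hu : (0 : ℝ) < (U.card : ℝ) := by
    exact_mod_cast Finset.card_pos.2 hU
  have hinner : ∀ θ : ℕ,
      (∑ is : Fin θ → {x // x ∈ U},
        (corrPairs A (List.ofFn (fun j : Fin θ => (is j : Fin n))) U : ℝ))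
      = ∑ a ∈ U, (NNn A U a θ : ℝ) := by
    intro θ
    calc (∑ is : Fin θ → {x // x ∈ U},
          (corrPairs A (List.ofFn (fun j : Fin θ => (is j : Fin n))) U : ℝ))
        = ∑ is : Fin θ → {x // x ∈ U}, ∑ a ∈ U,
            ((sliceF A (pinsOf U is) U a).card : ℝ) := by
          refine Finset.sum_congr rfl fun is _ => ?_
          rw [corrPairs_eq_sum A _ U]
          push_cast
          rfl
      _ = ∑ a ∈ U, ∑ is : Fin θ → {x // x ∈ U},
            ((sliceF A (pinsOf U is) U a).card : ℝ) := Finset.sum_comm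
      _ = ∑ a ∈ U, (NNn A U a θ : ℝ) := by
          refine Finset.sum_congr rfl fun a _ => ?_
          unfold NNn
          push_cast
          rfl
  have hmain : (∑ θ ∈ Finset.Icc 1 Θ,
      ((1 / (U.card : ℝ) ^ θ) *
        ∑ is : Fin θ → {x // x ∈ U},
          (corrPairs A (List.ofFn (fun j : Fin θ => (is j : Fin n))) U : ℝ)))
      ≤ 2 * (U.card : ℝ) ^ 2 := by
    calc (∑ θ ∈ Finset.Icc 1 Θ,
        ((1 / (U.card : ℝ) ^ θ) *
          ∑ is : Fin θ → {x // x ∈ U},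
            (corrPairs A (List.ofFn (fun j : Fin θ => (is j : Fin n))) U : ℝ)))
        = ∑ θ ∈ Finset.Icc 1 Θ, ∑ a ∈ U, (NNn A U a θ : ℝ) / (U.card : ℝ) ^ θ := by
          refine Finset.sum_congr rfl fun θ _ => ?_
          rw [hinner θ, Finset.mul_sum]
          refine Finset.sum_congr rfl fun a _ => ?_
          rw [one_div, inv_mul_eq_div]
      _ = ∑ a ∈ U, ∑ θ ∈ Finset.Icc 1 Θ, (NNn A U a θ : ℝ) / (U.card : ℝ) ^ θ :=
          Finset.sum_comm
      _ ≤ ∑ _a ∈ U, 2 * (U.card : ℝ) :=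
          Finset.sum_le_sum (fun a _ => window_bound A U hU a Θ)
      _ = (U.card : ℝ) * (2 * (U.card : ℝ)) := by
          rw [Finset.sum_const, nsmul_eq_mul]
      _ = 2 * (U.card : ℝ) ^ 2 := by ring
  have hΘ0 : (0 : ℝ) ≤ 1 / (Θ : ℝ) := by positivity
  calc (1 / (Θ : ℝ)) * ∑ θ ∈ Finset.Icc 1 Θ,
        ((1 / (U.card : ℝ) ^ θ) *
          ∑ is : Fin θ → {x // x ∈ U},
            (corrPairs A (List.ofFn (fun j : Fin θ => (is j : Fin n))) U : ℝ))
      ≤ (1 / (Θ : ℝ)) * (2 * (U.card : ℝ) ^ 2) :=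
        mul_le_mul_of_nonneg_left hmain hΘ0
    _ = (2 / (Θ : ℝ)) * (U.card : ℝ) ^ 2 := by ring
end

section
/- Let n, m ≥ 1, let G be a bipartite graph with variable nodes x_1,...,x_n and check nodes a_1,...,a_m, let A ∈ F_q^{m×n} be a matrix whose support is contained in the adjacency of G (A_{ij} ≠ 0 only if a_i x_j ∈ E(G)). Let G* be the 2-core of G (obtained by iteratively deleting a variable node of degree ≤ 1 together with its adjacent check node, if any), with n* variable nodes and m* check nodes. Then nul(A) ≥ n - n* - (m - m*). -/
open Finset

section

variable {F ι κ : Type*} [Field F] [Fintype κ]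

theorem mem_span_single_of_forall_notMem_eq_zero [DecidableEq κ] {V : Finset κ} {v : κ → F}
    (hv : ∀ j ∉ V, v j = 0) :
    v ∈ Submodule.span F ((fun j ↦ Pi.single j (1 : F)) '' V) := by
  have hsum : v = ∑ j ∈ V, v j • Pi.single j (1 : F) := by
    conv_lhs => rw [pi_eq_sum_univ' v]
    refine (sum_subset (subset_univ V) fun j _ hj ↦ ?_).symm
    simp [hv j hj]
  rw [hsum]
  exact Submodule.sum_mem _ fun j hj ↦
    Submodule.smul_mem _ _ (Submodule.subset_span (Set.mem_image_of_mem _ hj))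

theorem Matrix.rank_le_card_add_card_compl [Fintype ι] [DecidableEq ι] (A : Matrix ι κ F)
    (C : Finset ι) (V : Finset κ) (hA : ∀ a ∈ C, ∀ j ∉ V, A a j = 0) :
    A.rank ≤ #V + #Cᶜ := by
  classical
  let S : Finset (κ → F) := V.image (fun j ↦ Pi.single j 1) ∪ Cᶜ.image A.row
  have hrows : Set.range A.row ⊆ (Submodule.span F (S : Set (κ → F)) : Set (κ → F)) := by
    rintro _ ⟨a, rfl⟩
    by_cases ha : a ∈ C
    · exact Submodule.span_mono (by rw [coe_union, coe_image]; exact Set.subset_union_left)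
        (mem_span_single_of_forall_notMem_eq_zero (hA a ha))
    · exact Submodule.subset_span
        (mem_coe.2 (mem_union_right _ (mem_image_of_mem A.row (mem_compl.2 ha))))
  calc A.rank = Module.finrank F (Submodule.span F (Set.range A.row)) :=
        A.rank_eq_finrank_span_row
    _ ≤ Module.finrank F (Submodule.span F (S : Set (κ → F))) :=
        Submodule.finrank_mono (Submodule.span_le.2 hrows)
    _ ≤ #S := finrank_span_finset_le_card S
    _ ≤ #V + #Cᶜ := (card_union_le _ _).trans (add_le_add card_image_le card_image_le)

theorem nullity_add_rank [Fintype ι] (A : Matrix ι κ F) :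
    nullity A + A.rank = Fintype.card κ := by
  rw [nullity, Matrix.rank, add_comm, LinearMap.finrank_range_add_finrank_ker,
    Module.finrank_fintype_fun_eq_card]

end

theorem stmt_17_general {F : Type} [Field F]
    (m n : ℕ)
    (E : Fin m → Fin n → Prop)
    (A : Matrix (Fin m) (Fin n) F)
    (hsupp : ∀ a j, A a j ≠ 0 → E a j)
    (Vstar : Finset (Fin n)) (Cstar : Finset (Fin m))
    (hCcl : ∀ a ∈ Cstar, ∀ j : Fin n, E a j → j ∈ Vstar) :
    (n : ℤ) - Vstar.card - ((m : ℤ) - Cstar.card) ≤ (nullity A : ℤ) := by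
  have hA : ∀ a ∈ Cstar, ∀ j ∉ Vstar, A a j = 0 := fun a ha j hj ↦
    not_not.1 fun h ↦ hj (hCcl a ha j (hsupp a j h))
  have hrank := A.rank_le_card_add_card_compl Cstar Vstar hA
  have hnull := nullity_add_rank A
  have hcompl : #Cstarᶜ + #Cstar = m := (card_compl_add_card Cstar).trans (Fintype.card_fin m)
  rw [Fintype.card_fin] at hnull
  omega

/-- The graph-theoretic 2-core bound on the nullity: if `A` is supported on the
bipartite (Tanner) graph `E` between `m` check nodes and `n` variable nodes, and
`(V*, C*)` is the 2-core of the graph — so every variable node of `V*` has at least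
two neighbours in `C*` and every check node of `C*` has all its neighbours in `V*` —
then `nul(A) ≥ n - n* - (m - m*)` where `n* = |V*|`, `m* = |C*|`. -/
theorem stmt_17 {F : Type} [Field F] [Fintype F] [DecidableEq F]
    (m n : ℕ) (hm : 1 ≤ m) (hn : 1 ≤ n)
    (E : Fin m → Fin n → Prop)
    (A : Matrix (Fin m) (Fin n) F)
    (hsupp : ∀ a j, A a j ≠ 0 → E a j)
    (Vstar : Finset (Fin n)) (Cstar : Finset (Fin m))
    (hVdeg : ∀ j ∈ Vstar, ∃ a ∈ Cstar, ∃ b ∈ Cstar, a ≠ b ∧ E a j ∧ E b j)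
    (hCcl : ∀ a ∈ Cstar, ∀ j : Fin n, E a j → j ∈ Vstar) :
    (n : ℤ) - Vstar.card - ((m : ℤ) - Cstar.card) ≤ (nullity A : ℤ) :=
  stmt_17_general m n E A hsupp Vstar Cstar hCcl
end
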